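/- Let R be a ring with left stable range 1. If p, q, d ∈ R satisfy Rp + Rq = Rd, then there exist t ∈ R and a unit u ∈ R* such that tp + q = ud. -/

import Mathlib

/-!
Write `d = a p + b q` and `q = c d`. Since `(1 - b c) + b c = 1`, the elements `1 - b c` and `c`
generate `R` as a left ideal, so stable range 1 yields a unit `u = t (1 - b c) + c`; then
`u d = t d - t b q + q = (t a) p + q`.
-/

theorem Ideal.span_one_sub_mul_sup_span_singleton_eq_top {R : Type*} [Ring R] (b c : R) :
    Ideal.span {1 - b * c} ⊔ Ideal.span {c} = ⊤ := by
  rw [← Ideal.span_insert, Ideal.eq_top_iff_one, Ideal.mem_span_pair]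
  exact ⟨1, b, by noncomm_ring⟩

theorem stable_range_one_unit_linear_comb {R : Type*} [Ring R]
    (hsr : ∀ p q : R, Ideal.span {p} ⊔ Ideal.span {q} = ⊤ → ∃ t : R, IsUnit (t * p + q))
    (p q d : R) (h : Ideal.span {p} ⊔ Ideal.span {q} = Ideal.span {d}) :
    ∃ (t : R) (u : Rˣ), t * p + q = (u : R) * d := by
  obtain ⟨a, b, hd⟩ : ∃ a b, a * p + b * q = d := by
    rw [← Ideal.mem_span_pair, Ideal.span_insert, h]
    exact Ideal.mem_span_singleton_self d
  obtain ⟨c, hq⟩ : ∃ c, c * d = q := by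
    rw [← Ideal.mem_span_singleton', ← h]
    exact Submodule.mem_sup_right (Ideal.mem_span_singleton_self q)
  obtain ⟨t, u, hu⟩ := hsr _ _ (Ideal.span_one_sub_mul_sup_span_singleton_eq_top b c)
  refine ⟨t * a, u, ?_⟩
  calc t * a * p + q = t * (a * p + b * q) - t * b * (c * d) + c * d := by
        rw [hq]; noncomm_ring
    _ = (t * (1 - b * c) + c) * d := by rw [hd]; noncomm_ring
    _ = u * d := by rw [hu]
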